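/- For the 3D magnetic Laplacian h = L*L with L = (−i∂_{x¹} + (b/2)x², −i∂_{x²} − (b/2)x¹, −i∂_{x³}) and Coulomb potential w(x) = 1/|x|, the bilinear estimate ‖h^{1/2}((|φ₁|² * w) φ₂)‖_{L²(ℝ³)} ≲ ‖h^{1/2}φ₁‖²_{L²} ‖h^{1/2}φ₂‖_{L²} holds for Schwartz φ₁, φ₂, given as inputs: (i) the pointwise Kato inequality |∇|f|| ≲ |Lf|, (ii) ‖|φ|²*w‖_{L^∞} ≲ ‖h^{1/2}φ‖²_{L²}, (iii) Sobolev embedding ‖φ‖_{L⁶(ℝ³)} ≲ ‖h^{1/2}φ‖_{L²}, and (iv) ‖|∇|(|φ|²*w)‖_{L³} ≲ ‖h^{1/2}φ‖²_{L²}. -/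

import Mathlib

open MeasureTheory

noncomputable section

abbrev E3 := EuclideanSpace ℝ (Fin 3)

/-- Partial derivative in the `j`-th coordinate direction. -/
def pd (j : Fin 3) (f : E3 → ℂ) (x : E3) : ℂ := fderiv ℝ f x (EuclideanSpace.single j 1)

/-- Pointwise squared norm `|Lf(x)|²` of the magnetic gradient
`L = (−i∂₁ + (b/2)x², −i∂₂ − (b/2)x¹, −i∂₃)`. -/
def magGradNormSq (b : ℝ) (f : E3 → ℂ) (x : E3) : ℝ :=
  ‖-Complex.I * pd 0 f x + ((b / 2 : ℝ) : ℂ) * ((x 1 : ℝ) : ℂ) * f x‖ ^ 2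
    + ‖-Complex.I * pd 1 f x - ((b / 2 : ℝ) : ℂ) * ((x 0 : ℝ) : ℂ) * f x‖ ^ 2
    + ‖-Complex.I * pd 2 f x‖ ^ 2

/-- The Coulomb potential term `(|φ|² * w)(x) = ∫ |φ(x−y)|² / |y| dy`, `w(y) = 1/|y|`. -/
def coul (φ : E3 → ℂ) (x : E3) : ℝ := ∫ y : E3, ‖φ (x - y)‖ ^ 2 / ‖y‖

open scoped ENNReal NNReal
open Metric Set
set_option maxHeartbeats 1000000
set_option synthInstance.maxHeartbeats 200000

lemma finrankE3 : Module.finrank ℝ E3 = 3 := by simp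

lemma invnorm_integrableOn_ball : IntegrableOn (fun y : E3 => ‖y‖⁻¹) (ball (0:E3) 1) volume := by
  have hmeas : Measurable fun y : E3 => ‖y‖⁻¹ := measurable_norm.inv
  constructor
  · exact hmeas.aestronglyMeasurable.restrict
  · rw [hasFiniteIntegral_iff_norm]
    have hnn : ∀ y : E3, (0:ℝ) ≤ ‖y‖⁻¹ := fun y => by positivity
    have heq : ∀ y : E3, ENNReal.ofReal ‖‖y‖⁻¹‖ = ENNReal.ofReal (‖y‖⁻¹) := fun y => by
      rw [Real.norm_eq_abs, abs_of_nonneg (hnn y)]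
    simp_rw [heq]
    rw [lintegral_eq_lintegral_meas_le (volume.restrict (ball (0:E3) 1))
      (Filter.Eventually.of_forall hnn) hmeas.aemeasurable]
    set V := volume (ball (0:E3) 1) with hV
    have hVfin : V < ⊤ := measure_ball_lt_top
    have hle : ∀ t, t ∈ Ioi (0:ℝ) → (volume.restrict (ball (0:E3) 1)) {a : E3 | t ≤ ‖a‖⁻¹}
        ≤ min V (ENNReal.ofReal ((t⁻¹)^(3:ℕ)) * V) := by
      intro t ht
      have htpos : (0:ℝ) < t := mem_Ioi.mp ht
      have htinv : (0:ℝ) ≤ t⁻¹ := by positivity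
      refine le_min ?_ ?_
      · exact le_trans (measure_mono (subset_univ _)) (le_of_eq (Measure.restrict_apply_univ _))
      · calc (volume.restrict (ball (0:E3) 1)) {a : E3 | t ≤ ‖a‖⁻¹}
            ≤ volume {a : E3 | t ≤ ‖a‖⁻¹} := Measure.restrict_le_self _
          _ ≤ volume (closedBall (0:E3) t⁻¹) := by
              apply measure_mono
              intro a ha
              simp only [mem_setOf_eq] at ha
              simp only [mem_closedBall, dist_zero_right]
              rcases eq_or_lt_of_le (norm_nonneg a) with h0 | h0
              · rw [← h0]; exact htinv
              · rw [le_inv_comm₀ htpos h0] at ha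
                exact ha
          _ = ENNReal.ofReal ((t⁻¹)^(3:ℕ)) * V := by
              rw [hV, Measure.addHaar_closedBall _ _ htinv, finrankE3]
    calc ∫⁻ t in Ioi (0:ℝ), (volume.restrict (ball (0:E3) 1)) {a : E3 | t ≤ ‖a‖⁻¹}
        ≤ ∫⁻ t in Ioi (0:ℝ), min V (ENNReal.ofReal ((t⁻¹)^(3:ℕ)) * V) :=
          setLIntegral_mono' measurableSet_Ioi hle
      _ ≤ (∫⁻ t in Ioc (0:ℝ) 1, min V (ENNReal.ofReal ((t⁻¹)^(3:ℕ)) * V))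
            + ∫⁻ t in Ioi (1:ℝ), min V (ENNReal.ofReal ((t⁻¹)^(3:ℕ)) * V) := by
          rw [← lintegral_union measurableSet_Ioi (Ioc_disjoint_Ioi le_rfl)]
          exact lintegral_mono_set Ioi_subset_Ioc_union_Ioi
      _ < ⊤ := by
          rw [ENNReal.add_lt_top]
          constructor
          · calc (∫⁻ t in Ioc (0:ℝ) 1, min V (ENNReal.ofReal ((t⁻¹)^(3:ℕ)) * V))
                ≤ ∫⁻ _ in Ioc (0:ℝ) 1, V := lintegral_mono fun t => min_le_left _ _
            _ = V * volume (Ioc (0:ℝ) 1) := by rw [setLIntegral_const]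
            _ < ⊤ := by
                rw [Real.volume_Ioc]
                exact ENNReal.mul_lt_top hVfin (by norm_num)
          · calc (∫⁻ t in Ioi (1:ℝ), min V (ENNReal.ofReal ((t⁻¹)^(3:ℕ)) * V))
                ≤ ∫⁻ t in Ioi (1:ℝ), ENNReal.ofReal (t ^ (-3 : ℝ)) * V := by
                  apply lintegral_mono_ae
                  filter_upwards [ae_restrict_mem measurableSet_Ioi] with t ht
                  refine le_trans (min_le_right _ _) (le_of_eq ?_)
                  have htpos : (0:ℝ) < t := lt_trans zero_lt_one (mem_Ioi.mp ht)
                  have h3 : ((t:ℝ)⁻¹)^(3:ℕ) = t ^ (-3:ℝ) := by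
                    rw [inv_pow, Real.rpow_neg htpos.le, ← Real.rpow_natCast t 3]
                    norm_num
                  rw [h3]
              _ = (∫⁻ t in Ioi (1:ℝ), ENNReal.ofReal (t ^ (-3 : ℝ))) * V :=
                  lintegral_mul_const' V _ (by exact hVfin.ne)
              _ < ⊤ := by
                  apply ENNReal.mul_lt_top _ hVfin
                  exact (integrableOn_Ioi_rpow_of_lt (by norm_num) zero_lt_one).setLIntegral_lt_top


-- (1+t)^4 ≤ 16 (1 + t^4) for t ≥ 0
lemma pow4_bound {t : ℝ} (ht : 0 ≤ t) : (1+t)^4 ≤ 16 * (1 + t^4) := by nlinarith [sq_nonneg t, sq_nonneg (t-1), sq_nonneg (t^2-1), sq_nonneg (t^2-t), pow_nonneg ht 3, pow_nonneg ht 4]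

-- decay of a Schwartz map at order (4, n)
lemma schwartz_decay4 {F : Type*} [NormedAddCommGroup F] [NormedSpace ℝ F]
    (f : SchwartzMap E3 F) : ∃ C : ℝ, 0 ≤ C ∧ ∀ z : E3, ‖f z‖ ≤ C * ((1+‖z‖)^4)⁻¹ := by
  obtain ⟨C0, hC0pos, h0⟩ := f.decay 0 0
  obtain ⟨C4, hC4pos, h4⟩ := f.decay 4 0
  refine ⟨16 * (C0 + C4), by positivity, fun z => ?_⟩
  have hz : (0:ℝ) < (1+‖z‖)^4 := by positivity
  rw [← div_eq_mul_inv, le_div_iff₀ hz, mul_comm]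
  have h0' := h0 z
  have h4' := h4 z
  rw [norm_iteratedFDeriv_zero] at h0' h4'
  simp only [pow_zero, one_mul] at h0'
  calc (1+‖z‖)^4 * ‖f z‖ ≤ 16 * (1 + ‖z‖^4) * ‖f z‖ := by
        apply mul_le_mul_of_nonneg_right (pow4_bound (norm_nonneg z)) (norm_nonneg _)
    _ = 16 * (‖f z‖ + ‖z‖^4 * ‖f z‖) := by ring
    _ ≤ 16 * (C0 + C4) := by
        apply mul_le_mul_of_nonneg_left _ (by norm_num)
        exact add_le_add h0' h4'

lemma base_integrable : Integrable (fun y : E3 => ‖y‖⁻¹ * ((1+‖y‖)^4)⁻¹) volume := by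
  have hmeas : Measurable fun y : E3 => ‖y‖⁻¹ * ((1+‖y‖)^4)⁻¹ :=
    measurable_norm.inv.mul (((measurable_const.add measurable_norm).pow_const 4).inv)
  rw [← integrableOn_univ, ← union_compl_self (ball (0:E3) 1)]
  apply IntegrableOn.union
  · apply Integrable.mono' (invnorm_integrableOn_ball) (hmeas.aestronglyMeasurable.restrict)
    filter_upwards with y
    have h1 : (0:ℝ) ≤ ‖y‖⁻¹ := by positivity
    have h2 : ((1+‖y‖)^4)⁻¹ ≤ 1 := by
      rw [inv_le_one_iff₀]
      right
      calc (1:ℝ) = 1^4 := by norm_num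
      _ ≤ (1+‖y‖)^4 := by gcongr; linarith [norm_nonneg y]
    rw [Real.norm_eq_abs, abs_of_nonneg (by positivity)]
    calc ‖y‖⁻¹ * ((1+‖y‖)^4)⁻¹ ≤ ‖y‖⁻¹ * 1 := by gcongr
      _ = ‖y‖⁻¹ := mul_one _
  · have hjap : Integrable (fun y : E3 => (1+‖y‖) ^ (-(4:ℝ))) volume := by
      apply integrable_one_add_norm
      rw [finrankE3]; norm_num
    apply Integrable.mono' (hjap.integrableOn) (hmeas.aestronglyMeasurable.restrict)
    filter_upwards [ae_restrict_mem (measurableSet_ball.compl)] with y hy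
    have hy1 : (1:ℝ) ≤ ‖y‖ := by
      simp only [mem_compl_iff, mem_ball, dist_zero_right, not_lt] at hy
      exact hy
    have h2 : ‖y‖⁻¹ ≤ 1 := by
      rw [inv_le_one_iff₀]; right; exact hy1
    have h3 : (1+‖y‖) ^ (-(4:ℝ)) = ((1+‖y‖)^4)⁻¹ := by
      rw [Real.rpow_neg (by positivity), ← Real.rpow_natCast (1+‖y‖) 4]
      norm_num
    rw [Real.norm_eq_abs, abs_of_nonneg (by positivity), h3]
    calc ‖y‖⁻¹ * ((1+‖y‖)^4)⁻¹ ≤ 1 * ((1+‖y‖)^4)⁻¹ := by gcongr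
      _ = ((1+‖y‖)^4)⁻¹ := one_mul _

-- translation inequality
lemma shift_bound {R : ℝ} (hR : 0 ≤ R) {x y : E3} (hx : ‖x‖ ≤ R) :
    ((1 + ‖x - y‖)^4)⁻¹ ≤ (1+R)^4 * ((1+‖y‖)^4)⁻¹ := by
  have h1 : (0:ℝ) < 1 + ‖x-y‖ := by positivity
  have h2 : (0:ℝ) < 1 + ‖y‖ := by positivity
  have key : 1 + ‖y‖ ≤ (1+R) * (1+‖x-y‖) := by
    have hy : ‖y‖ ≤ ‖x‖ + ‖x - y‖ := by
      calc ‖y‖ = ‖x - (x - y)‖ := by rw [sub_sub_cancel]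
        _ ≤ ‖x‖ + ‖x - y‖ := norm_sub_le _ _
    nlinarith [norm_nonneg (x - y), norm_nonneg x]
  have h6 : (1+‖x-y‖)⁻¹ ≤ (1+R) * (1+‖y‖)⁻¹ := by
    have h7 : ((1+R) * (1+‖x-y‖))⁻¹ ≤ (1+‖y‖)⁻¹ := by gcongr
    calc (1+‖x-y‖)⁻¹ = (1+R) * ((1+R) * (1+‖x-y‖))⁻¹ := by
          rw [mul_inv, ← mul_assoc, mul_inv_cancel₀ (by positivity), one_mul]
      _ ≤ (1+R) * (1+‖y‖)⁻¹ := by gcongr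
  calc ((1 + ‖x - y‖)^4)⁻¹ = ((1 + ‖x - y‖)⁻¹)^4 := by rw [inv_pow]
    _ ≤ ((1+R) * (1+‖y‖)⁻¹)^4 := by
        apply pow_le_pow_left₀ (by positivity) h6
    _ = (1+R)^4 * ((1+‖y‖)^4)⁻¹ := by rw [mul_pow, inv_pow]



lemma coul_differentiableAt (φ : SchwartzMap E3 ℂ) (x₀ : E3) :
    DifferentiableAt ℝ (fun x => coul (⇑φ) x) x₀ := by
  set u : E3 → ℝ := fun z => ‖φ z‖^2 with hu_def
  have hcoul : (fun x => coul (⇑φ) x) = fun x => ∫ y : E3, ‖y‖⁻¹ * u (x - y) := by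
    funext x
    unfold coul
    congr 1
    funext y
    rw [div_eq_mul_inv, mul_comm]
  set uD : E3 → (E3 →L[ℝ] ℝ) := fun z => 2 • (innerSL ℝ (φ z)).comp (fderiv ℝ (⇑φ) z) with huD_def
  have hu : ∀ z : E3, HasFDerivAt u (uD z) z := fun z =>
    (φ.differentiableAt.hasFDerivAt).norm_sq
  obtain ⟨Cφ, hCφ, hφb⟩ := schwartz_decay4 φ
  obtain ⟨Cd, hCd, hdb⟩ := schwartz_decay4 (SchwartzMap.fderivCLM ℝ E3 ℂ φ)
  have hinv1 : ∀ z : E3, ((1+‖z‖)^4)⁻¹ ≤ 1 := fun z => by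
    rw [inv_le_one_iff₀]
    right
    calc (1:ℝ) = 1^4 := by norm_num
      _ ≤ (1+‖z‖)^4 := by gcongr; linarith [norm_nonneg z]
  have hφsup : ∀ z : E3, ‖φ z‖ ≤ Cφ := fun z => by
    calc ‖φ z‖ ≤ Cφ * ((1+‖z‖)^4)⁻¹ := hφb z
      _ ≤ Cφ * 1 := by gcongr; exact hinv1 z
      _ = Cφ := mul_one _
  have hfdb : ∀ z : E3, ‖fderiv ℝ (⇑φ) z‖ ≤ Cd * ((1+‖z‖)^4)⁻¹ := fun z => by
    have := hdb z
    rwa [SchwartzMap.fderivCLM_apply] at this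
  have huDb : ∀ z : E3, ‖uD z‖ ≤ 2*Cφ*Cd * ((1+‖z‖)^4)⁻¹ := fun z => by
    have hT : ‖(innerSL ℝ (φ z)).comp (fderiv ℝ (⇑φ) z)‖ ≤ ‖φ z‖ * ‖fderiv ℝ (⇑φ) z‖ := by
      refine le_trans (ContinuousLinearMap.opNorm_comp_le _ _) ?_
      rw [innerSL_apply_norm]
    calc ‖uD z‖ = ‖(innerSL ℝ (φ z)).comp (fderiv ℝ (⇑φ) z)
          + (innerSL ℝ (φ z)).comp (fderiv ℝ (⇑φ) z)‖ := by
          show ‖2 • (innerSL ℝ (φ z)).comp (fderiv ℝ (⇑φ) z)‖ = _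
          rw [two_smul]
      _ ≤ ‖(innerSL ℝ (φ z)).comp (fderiv ℝ (⇑φ) z)‖
          + ‖(innerSL ℝ (φ z)).comp (fderiv ℝ (⇑φ) z)‖ := norm_add_le _ _
      _ ≤ ‖φ z‖ * ‖fderiv ℝ (⇑φ) z‖ + ‖φ z‖ * ‖fderiv ℝ (⇑φ) z‖ := add_le_add hT hT
      _ ≤ Cφ * (Cd * ((1+‖z‖)^4)⁻¹) + Cφ * (Cd * ((1+‖z‖)^4)⁻¹) :=
          add_le_add (mul_le_mul (hφsup z) (hfdb z) (norm_nonneg _) hCφ)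
            (mul_le_mul (hφsup z) (hfdb z) (norm_nonneg _) hCφ)
      _ = 2*Cφ*Cd * ((1+‖z‖)^4)⁻¹ := by ring
  have hub : ∀ z : E3, u z ≤ Cφ*Cφ * ((1+‖z‖)^4)⁻¹ := fun z => by
    calc u z = ‖φ z‖ * ‖φ z‖ := by show ‖φ z‖^2 = _; ring
      _ ≤ Cφ * (Cφ * ((1+‖z‖)^4)⁻¹) := mul_le_mul (hφsup z) (hφb z) (norm_nonneg _) hCφ
      _ = Cφ*Cφ * ((1+‖z‖)^4)⁻¹ := by ring
  have hunn : ∀ z : E3, 0 ≤ u z := fun z => by rw [hu_def]; positivity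
  have hucont : Continuous u := (φ.continuous.norm.pow 2)
  have hmeasF : ∀ x : E3, AEStronglyMeasurable (fun y : E3 => ‖y‖⁻¹ * u (x - y)) volume := by
    intro x
    exact (measurable_norm.inv.aestronglyMeasurable).mul
      ((hucont.comp (continuous_const.sub continuous_id)).aestronglyMeasurable)
  set R : ℝ := ‖x₀‖ + 1 with hR
  have hRnn : (0:ℝ) ≤ R := by positivity
  have hx₀R : ‖x₀‖ ≤ R := by rw [hR]; linarith
  rw [hcoul]
  have H := hasFDerivAt_integral_of_dominated_of_fderiv_le (μ := volume)
      (F := fun (x : E3) (y : E3) => ‖y‖⁻¹ * u (x - y))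
      (F' := fun (x : E3) (y : E3) => ‖y‖⁻¹ • uD (x - y)) (x₀ := x₀)
      (bound := fun y : E3 => (2*Cφ*Cd*(1+R)^4) * (‖y‖⁻¹ * ((1+‖y‖)^4)⁻¹))
      (Metric.ball_mem_nhds x₀ zero_lt_one)
      (Filter.Eventually.of_forall hmeasF)
      ?_ ?_ ?_ ?_ ?_
  · exact H.differentiableAt
  · -- integrability at x₀
    apply Integrable.mono' (base_integrable.const_mul (Cφ*Cφ*(1+R)^4)) (hmeasF x₀)
    filter_upwards with y
    have h0 : (0:ℝ) ≤ ‖y‖⁻¹ * u (x₀ - y) := mul_nonneg (by positivity) (hunn _)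
    rw [Real.norm_eq_abs, abs_of_nonneg h0]
    calc ‖y‖⁻¹ * u (x₀ - y) ≤ ‖y‖⁻¹ * (Cφ*Cφ * ((1+‖x₀-y‖)^4)⁻¹) :=
          mul_le_mul_of_nonneg_left (hub _) (inv_nonneg.mpr (norm_nonneg y))
      _ ≤ ‖y‖⁻¹ * (Cφ*Cφ * ((1+R)^4 * ((1+‖y‖)^4)⁻¹)) :=
          mul_le_mul_of_nonneg_left
            (mul_le_mul_of_nonneg_left (shift_bound hRnn hx₀R) (mul_nonneg hCφ hCφ))
            (inv_nonneg.mpr (norm_nonneg y))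
      _ = (Cφ*Cφ*(1+R)^4) * (‖y‖⁻¹ * ((1+‖y‖)^4)⁻¹) := by ring
  · -- measurability of F' x₀
    have hcont : Continuous uD := by
      have h1 : Continuous fun z : E3 => innerSL ℝ (φ z) :=
        (innerSL ℝ).continuous.comp φ.continuous
      have h2 : Continuous (fderiv ℝ (⇑φ)) := (φ.smooth ⊤).continuous_fderiv (by simp)
      have h3 : Continuous fun z : E3 => (innerSL ℝ (φ z)).comp (fderiv ℝ (⇑φ) z) :=
        h1.clm_comp h2
      rw [huD_def]
      simp_rw [two_smul]
      exact h3.add h3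
    exact (measurable_norm.inv.aestronglyMeasurable).smul
      ((hcont.comp (continuous_const.sub continuous_id)).aestronglyMeasurable)
  · -- bound
    filter_upwards with y
    intro x hx
    have hxR : ‖x‖ ≤ R := by
      have hd : ‖x - x₀‖ < 1 := mem_ball_iff_norm.mp hx
      calc ‖x‖ = ‖x₀ + (x - x₀)‖ := by rw [add_sub_cancel]
        _ ≤ ‖x₀‖ + ‖x - x₀‖ := norm_add_le _ _
        _ ≤ R := by rw [hR]; linarith
    have hns : ‖‖y‖⁻¹ • uD (x - y)‖ = ‖y‖⁻¹ * ‖uD (x - y)‖ := by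
      rw [norm_smul (‖y‖⁻¹) (uD (x - y)), Real.norm_eq_abs,
        abs_of_nonneg (inv_nonneg.mpr (norm_nonneg y))]
    rw [hns]
    calc ‖y‖⁻¹ * ‖uD (x - y)‖ ≤ ‖y‖⁻¹ * (2*Cφ*Cd * ((1+‖x-y‖)^4)⁻¹) :=
          mul_le_mul_of_nonneg_left (huDb _) (inv_nonneg.mpr (norm_nonneg y))
      _ ≤ ‖y‖⁻¹ * (2*Cφ*Cd * ((1+R)^4 * ((1+‖y‖)^4)⁻¹)) :=
          mul_le_mul_of_nonneg_left
            (mul_le_mul_of_nonneg_left (shift_bound hRnn hxR)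
              (by positivity))
            (inv_nonneg.mpr (norm_nonneg y))
      _ = (2*Cφ*Cd*(1+R)^4) * (‖y‖⁻¹ * ((1+‖y‖)^4)⁻¹) := by ring
  · exact base_integrable.const_mul _
  · -- differentiability of integrand
    filter_upwards with y
    intro x hx
    have h1 : HasFDerivAt (fun x : E3 => x - y) (ContinuousLinearMap.id ℝ E3) x :=
      (hasFDerivAt_id x).sub_const y
    have h2 := (hu (x - y)).comp x h1
    rw [ContinuousLinearMap.comp_id] at h2
    exact h2.const_mul (‖y‖⁻¹)

lemma coul_nonneg (f : E3 → ℂ) (x : E3) : 0 ≤ coul f x :=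
  integral_nonneg fun y => by positivity

-- component estimate
lemma comp_est (Fx : ℝ) (hFx : 0 ≤ Fx) (p v D c : ℂ) :
    ‖-Complex.I * ((Fx:ℂ) * p + v * D) + c * ((Fx:ℂ) * v)‖
      ≤ Fx * ‖-Complex.I * p + c * v‖ + ‖v‖ * ‖D‖ := by
  have h : -Complex.I * ((Fx:ℂ) * p + v * D) + c * ((Fx:ℂ) * v)
      = (Fx:ℂ) * (-Complex.I * p + c * v) + (-Complex.I) * (v * D) := by ring
  rw [h]
  calc ‖(Fx:ℂ) * (-Complex.I * p + c * v) + (-Complex.I) * (v * D)‖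
      ≤ ‖(Fx:ℂ) * (-Complex.I * p + c * v)‖ + ‖(-Complex.I) * (v * D)‖ := norm_add_le _ _
    _ = Fx * ‖-Complex.I * p + c * v‖ + ‖v‖ * ‖D‖ := by
        rw [norm_mul, norm_mul, norm_mul, norm_neg, Complex.norm_I, one_mul,
          Complex.norm_real, Real.norm_eq_abs, abs_of_nonneg hFx]


lemma key_pointwise (b : ℝ) (φ₁ φ₂ : SchwartzMap E3 ℂ) (x : E3) :
    Real.sqrt (magGradNormSq b (fun x' => ((coul (⇑φ₁) x' : ℝ) : ℂ) * φ₂ x') x)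
      ≤ 3 * (coul (⇑φ₁) x * Real.sqrt (magGradNormSq b (⇑φ₂) x))
        + 3 * (‖fderiv ℝ (fun x' => coul (⇑φ₁) x') x‖ * ‖φ₂ x‖) := by
  set Dx := fderiv ℝ (fun x' => coul (⇑φ₁) x') x with hDx
  set Fx := coul (⇑φ₁) x with hFx
  have hFxnn : 0 ≤ Fx := coul_nonneg _ _
  set Gx := ‖Dx‖ with hGx
  have hF : HasFDerivAt (fun x' => coul (⇑φ₁) x') Dx x :=
    (coul_differentiableAt φ₁ x).hasFDerivAt
  have hFc : HasFDerivAt (fun x' => ((coul (⇑φ₁) x' : ℝ) : ℂ)) (Complex.ofRealCLM.comp Dx) x :=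
    Complex.ofRealCLM.hasFDerivAt.comp x hF
  have hφ₂d : HasFDerivAt (⇑φ₂) (fderiv ℝ (⇑φ₂) x) x := φ₂.differentiableAt.hasFDerivAt
  have hmul : HasFDerivAt (fun x' => ((coul (⇑φ₁) x' : ℝ) : ℂ) * φ₂ x')
      (((Fx : ℝ) : ℂ) • fderiv ℝ (⇑φ₂) x + φ₂ x • (Complex.ofRealCLM.comp Dx)) x :=
    hFc.mul hφ₂d
  have hpd : ∀ j : Fin 3, pd j (fun x' => ((coul (⇑φ₁) x' : ℝ) : ℂ) * φ₂ x') x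
      = ((Fx : ℝ) : ℂ) * pd j (⇑φ₂) x
        + φ₂ x * ((Dx (EuclideanSpace.single j 1) : ℝ) : ℂ) := by
    intro j
    show fderiv ℝ (fun x' => ((coul (⇑φ₁) x' : ℝ) : ℂ) * φ₂ x') x (EuclideanSpace.single j 1) = _
    rw [hmul.fderiv]
    simp [pd, smul_eq_mul]
  have hD : ∀ j : Fin 3, ‖((Dx (EuclideanSpace.single j 1) : ℝ) : ℂ)‖ ≤ Gx := fun j => by
    rw [Complex.norm_real]
    calc ‖Dx (EuclideanSpace.single j 1)‖ ≤ ‖Dx‖ * ‖EuclideanSpace.single j (1:ℝ)‖ :=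
          Dx.le_opNorm _
      _ = Gx := by rw [EuclideanSpace.norm_single]; simp [hGx]
  set s := Real.sqrt (magGradNormSq b (⇑φ₂) x) with hs_def
  set c0 := ‖-Complex.I * pd 0 (⇑φ₂) x + ((b/2:ℝ):ℂ) * ((x 1:ℝ):ℂ) * φ₂ x‖ with hc0
  set c1 := ‖-Complex.I * pd 1 (⇑φ₂) x - ((b/2:ℝ):ℂ) * ((x 0:ℝ):ℂ) * φ₂ x‖ with hc1
  set c2 := ‖-Complex.I * pd 2 (⇑φ₂) x‖ with hc2
  have hsq : magGradNormSq b (⇑φ₂) x = c0^2 + c1^2 + c2^2 := rfl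
  have hc0nn : 0 ≤ c0 := norm_nonneg _
  have hc1nn : 0 ≤ c1 := norm_nonneg _
  have hc2nn : 0 ≤ c2 := norm_nonneg _
  have hsnn : 0 ≤ s := Real.sqrt_nonneg _
  have hle_s : ∀ c : ℝ, 0 ≤ c → c^2 ≤ c0^2+c1^2+c2^2 → c ≤ s := fun c hc h => by
    rw [hs_def, hsq]
    calc c = Real.sqrt (c^2) := (Real.sqrt_sq hc).symm
      _ ≤ Real.sqrt (c0^2+c1^2+c2^2) := Real.sqrt_le_sqrt h
  have hc0s : c0 ≤ s := hle_s c0 hc0nn (by nlinarith)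
  have hc1s : c1 ≤ s := hle_s c1 hc1nn (by nlinarith)
  have hc2s : c2 ≤ s := hle_s c2 hc2nn (by nlinarith)
  set f : E3 → ℂ := fun x' => ((coul (⇑φ₁) x' : ℝ) : ℂ) * φ₂ x' with hf_def
  have hfx : f x = ((Fx : ℝ) : ℂ) * φ₂ x := rfl
  set a0 := ‖-Complex.I * pd 0 f x + ((b/2:ℝ):ℂ) * ((x 1:ℝ):ℂ) * f x‖ with ha0
  set a1 := ‖-Complex.I * pd 1 f x - ((b/2:ℝ):ℂ) * ((x 0:ℝ):ℂ) * f x‖ with ha1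
  set a2 := ‖-Complex.I * pd 2 f x‖ with ha2
  have hmg : magGradNormSq b f x = a0^2 + a1^2 + a2^2 := rfl
  set D0 := ((Dx (EuclideanSpace.single 0 1) : ℝ) : ℂ) with hD0
  set D1 := ((Dx (EuclideanSpace.single 1 1) : ℝ) : ℂ) with hD1
  set D2 := ((Dx (EuclideanSpace.single 2 1) : ℝ) : ℂ) with hD2
  have key0 : a0 ≤ Fx * c0 + ‖φ₂ x‖ * Gx := by
    rw [ha0, hfx, hpd 0]
    have he : -Complex.I * (((Fx : ℝ) : ℂ) * pd 0 (⇑φ₂) x + φ₂ x * D0)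
        + ((b/2:ℝ):ℂ) * ((x 1:ℝ):ℂ) * (((Fx : ℝ) : ℂ) * φ₂ x)
        = -Complex.I * (((Fx : ℝ) : ℂ) * pd 0 (⇑φ₂) x + φ₂ x * D0)
        + (((b/2:ℝ):ℂ) * ((x 1:ℝ):ℂ)) * (((Fx : ℝ) : ℂ) * φ₂ x) := by ring
    rw [he]
    refine le_trans (comp_est Fx hFxnn (pd 0 (⇑φ₂) x) (φ₂ x) D0
      (((b/2:ℝ):ℂ) * ((x 1:ℝ):ℂ))) ?_
    have h2 : ‖φ₂ x‖ * ‖D0‖ ≤ ‖φ₂ x‖ * Gx :=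
      mul_le_mul_of_nonneg_left (hD 0) (norm_nonneg _)
    have h3 : ‖-Complex.I * pd 0 (⇑φ₂) x + (((b/2:ℝ):ℂ) * ((x 1:ℝ):ℂ)) * φ₂ x‖ = c0 := by
      rw [hc0]
    rw [h3]
    linarith
  have key1 : a1 ≤ Fx * c1 + ‖φ₂ x‖ * Gx := by
    rw [ha1, hfx, hpd 1]
    have he : -Complex.I * (((Fx : ℝ) : ℂ) * pd 1 (⇑φ₂) x + φ₂ x * D1)
        - ((b/2:ℝ):ℂ) * ((x 0:ℝ):ℂ) * (((Fx : ℝ) : ℂ) * φ₂ x)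
        = -Complex.I * (((Fx : ℝ) : ℂ) * pd 1 (⇑φ₂) x + φ₂ x * D1)
        + (-(((b/2:ℝ):ℂ) * ((x 0:ℝ):ℂ))) * (((Fx : ℝ) : ℂ) * φ₂ x) := by ring
    rw [he]
    refine le_trans (comp_est Fx hFxnn (pd 1 (⇑φ₂) x) (φ₂ x) D1
      (-(((b/2:ℝ):ℂ) * ((x 0:ℝ):ℂ)))) ?_
    have h2 : ‖φ₂ x‖ * ‖D1‖ ≤ ‖φ₂ x‖ * Gx :=
      mul_le_mul_of_nonneg_left (hD 1) (norm_nonneg _)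
    have h3 : ‖-Complex.I * pd 1 (⇑φ₂) x + (-(((b/2:ℝ):ℂ) * ((x 0:ℝ):ℂ))) * φ₂ x‖ = c1 := by
      rw [hc1]; exact congrArg norm (by ring)
    rw [h3]
    linarith
  have key2 : a2 ≤ Fx * c2 + ‖φ₂ x‖ * Gx := by
    rw [ha2, hpd 2]
    have he : -Complex.I * (((Fx : ℝ) : ℂ) * pd 2 (⇑φ₂) x + φ₂ x * D2)
        = -Complex.I * (((Fx : ℝ) : ℂ) * pd 2 (⇑φ₂) x + φ₂ x * D2)
        + (0:ℂ) * (((Fx : ℝ) : ℂ) * φ₂ x) := by ring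
    rw [he]
    refine le_trans (comp_est Fx hFxnn (pd 2 (⇑φ₂) x) (φ₂ x) D2 0) ?_
    have h2 : ‖φ₂ x‖ * ‖D2‖ ≤ ‖φ₂ x‖ * Gx :=
      mul_le_mul_of_nonneg_left (hD 2) (norm_nonneg _)
    have h3 : ‖-Complex.I * pd 2 (⇑φ₂) x + (0:ℂ) * φ₂ x‖ = c2 := by
      rw [hc2]; exact congrArg norm (by ring)
    rw [h3]
    linarith
  have ha0nn : 0 ≤ a0 := norm_nonneg _
  have ha1nn : 0 ≤ a1 := norm_nonneg _
  have ha2nn : 0 ≤ a2 := norm_nonneg _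
  have hsum_sq : a0^2 + a1^2 + a2^2 ≤ (a0+a1+a2)^2 := by
    nlinarith [mul_nonneg ha0nn ha1nn, mul_nonneg ha0nn ha2nn, mul_nonneg ha1nn ha2nn]
  have hsqrt_sum : Real.sqrt (magGradNormSq b f x) ≤ a0 + a1 + a2 := by
    rw [hmg]
    have h1 := Real.sqrt_le_sqrt hsum_sq
    rwa [Real.sqrt_sq (by positivity)] at h1
  have hFc0 : Fx * c0 ≤ Fx * s := mul_le_mul_of_nonneg_left hc0s hFxnn
  have hFc1 : Fx * c1 ≤ Fx * s := mul_le_mul_of_nonneg_left hc1s hFxnn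
  have hFc2 : Fx * c2 ≤ Fx * s := mul_le_mul_of_nonneg_left hc2s hFxnn
  have hcomm : ‖φ₂ x‖ * Gx = Gx * ‖φ₂ x‖ := mul_comm _ _
  linarith

lemma half_eq : (1:ℝ≥0∞)/2 = 1/3 + 1/6 := by
  have h3 : (1:ℝ≥0∞)/3 = ENNReal.ofReal (1/3) := by
    rw [ENNReal.ofReal_div_of_pos] <;> norm_num
  have h6 : (1:ℝ≥0∞)/6 = ENNReal.ofReal (1/6) := by
    rw [ENNReal.ofReal_div_of_pos] <;> norm_num
  have h2 : (1:ℝ≥0∞)/2 = ENNReal.ofReal (1/2) := by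
    rw [ENNReal.ofReal_div_of_pos] <;> norm_num
  rw [h3, h6, h2, ← ENNReal.ofReal_add (by norm_num) (by norm_num)]
  norm_num

/-- Conditional bilinear estimate for the 3D magnetic Laplacian `h = L*L` and Coulomb
potential `w(x) = 1/|x|`: given (the norm identity `‖h^{1/2}φ‖₂ = ‖Lφ‖₂` together with)
(i) the pointwise Kato inequality, (ii) `‖|φ|²*w‖_∞ ≲ ‖h^{1/2}φ‖₂²`,
(iii) the Sobolev embedding `‖φ‖₆ ≲ ‖h^{1/2}φ‖₂`, and
(iv) `‖∇(|φ|²*w)‖₃ ≲ ‖h^{1/2}φ‖₂²`, one has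
`‖h^{1/2}((|φ₁|²*w)φ₂)‖₂ ≲ ‖h^{1/2}φ₁‖₂² ‖h^{1/2}φ₂‖₂`. -/
theorem bilinear_estimate (b : ℝ) (hb : 0 < b) (sqrtH : (E3 → ℂ) → (E3 → ℂ))
    (hsqrt : ∀ φ : E3 → ℂ,
      eLpNorm (sqrtH φ) 2 volume
        = eLpNorm (fun x => Real.sqrt (magGradNormSq b φ x)) 2 volume)
    (hKato : ∃ C : ℝ, 0 < C ∧ ∀ f : E3 → ℂ, ContDiff ℝ (⊤ : ℕ∞) f → ∀ x : E3,
      ‖fderiv ℝ (fun x' => ‖f x'‖) x‖ ≤ C * Real.sqrt (magGradNormSq b f x))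
    (hLinf : ∃ C : ℝ, 0 < C ∧ ∀ φ : SchwartzMap E3 ℂ, ∀ x : E3,
      coul (⇑φ) x ≤ C * ((eLpNorm (sqrtH (⇑φ)) 2 volume).toReal) ^ 2)
    (hSob : ∃ C : ℝ, 0 < C ∧ ∀ φ : SchwartzMap E3 ℂ,
      eLpNorm (⇑φ) 6 volume ≤ ENNReal.ofReal C * eLpNorm (sqrtH (⇑φ)) 2 volume)
    (hHLS : ∃ C : ℝ, 0 < C ∧ ∀ φ : SchwartzMap E3 ℂ,
      eLpNorm (fun x => ‖fderiv ℝ (fun x' => coul (⇑φ) x') x‖) 3 volume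
        ≤ ENNReal.ofReal C * (eLpNorm (sqrtH (⇑φ)) 2 volume) ^ 2) :
    ∃ C : ℝ, 0 < C ∧ ∀ φ₁ φ₂ : SchwartzMap E3 ℂ,
      eLpNorm (sqrtH (fun x => ((coul (⇑φ₁) x : ℝ) : ℂ) * φ₂ x)) 2 volume
        ≤ ENNReal.ofReal C * (eLpNorm (sqrtH (⇑φ₁)) 2 volume) ^ 2 *
            eLpNorm (sqrtH (⇑φ₂)) 2 volume := by
  obtain ⟨C₁, hC₁, hL⟩ := hLinf
  obtain ⟨C₂, hC₂, hS⟩ := hSob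
  obtain ⟨C₃, hC₃, hH⟩ := hHLS
  refine ⟨3*C₁ + 3*C₃*C₂, by positivity, fun φ₁ φ₂ => ?_⟩
  by_cases hN1 : eLpNorm (sqrtH (⇑φ₁)) 2 volume = ⊤
  · have hA : ((eLpNorm (sqrtH (⇑φ₁)) 2 volume).toReal) = 0 := by rw [hN1]; simp
    have hz : ∀ x : E3, coul (⇑φ₁) x = 0 := fun x => by
      have h1 := hL φ₁ x
      rw [hA] at h1
      simp only [ne_eq, OfNat.ofNat_ne_zero, not_false_eq_true, zero_pow, mul_zero] at h1
      exact le_antisymm h1 (coul_nonneg _ _)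
    have hfun : (fun x : E3 => ((coul (⇑φ₁) x : ℝ) : ℂ) * φ₂ x) = fun _ => (0:ℂ) := by
      funext x; rw [hz x]; simp
    rw [hfun, hsqrt]
    have hmg0 : ∀ x : E3, magGradNormSq b (fun _ => (0:ℂ)) x = 0 := fun x => by
      have hpd0 : ∀ j : Fin 3, pd j (fun _ => (0:ℂ)) x = 0 := fun j => by
        rw [pd, fderiv_const_apply]
        simp
      simp [magGradNormSq, hpd0]
    simp only [hmg0, Real.sqrt_zero]
    rw [eLpNorm_zero']
    exact zero_le
  set N₁ := eLpNorm (sqrtH (⇑φ₁)) 2 volume with hN₁def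
  set N₂ := eLpNorm (sqrtH (⇑φ₂)) 2 volume with hN₂def
  set A := N₁.toReal with hAdef
  have hAnn : 0 ≤ A := ENNReal.toReal_nonneg
  set s₂ : E3 → ℝ := fun x => Real.sqrt (magGradNormSq b (⇑φ₂) x) with hs₂
  set G : E3 → ℝ := fun x => ‖fderiv ℝ (fun x' => coul (⇑φ₁) x') x‖ with hGdef
  set f₁ : E3 → ℝ := fun x => 3 * (coul (⇑φ₁) x * s₂ x) with hf₁
  set f₂ : E3 → ℝ := fun x => 3 * (G x * ‖φ₂ x‖) with hf₂
  -- measurability facts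
  have hcont_fd : Continuous (fderiv ℝ (⇑φ₂)) :=
    (φ₂.smooth ⊤).continuous_fderiv (by simp)
  have hcont_pd : ∀ j : Fin 3, Continuous (fun x => pd j (⇑φ₂) x) := fun j =>
    hcont_fd.clm_apply continuous_const
  have hcont_x : ∀ i : Fin 3, Continuous (fun x : E3 => x i) := fun i =>
    (EuclideanSpace.proj (𝕜 := ℝ) i).continuous
  have hcont_s₂ : Continuous s₂ := by
    rw [hs₂]
    apply Real.continuous_sqrt.comp
    have h0 : Continuous fun x : E3 =>
        -Complex.I * pd 0 (⇑φ₂) x + ((b/2:ℝ):ℂ) * ((x 1:ℝ):ℂ) * φ₂ x :=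
      (continuous_const.mul (hcont_pd 0)).add
        ((continuous_const.mul (Complex.continuous_ofReal.comp (hcont_x 1))).mul φ₂.continuous)
    have h1 : Continuous fun x : E3 =>
        -Complex.I * pd 1 (⇑φ₂) x - ((b/2:ℝ):ℂ) * ((x 0:ℝ):ℂ) * φ₂ x :=
      (continuous_const.mul (hcont_pd 1)).sub
        ((continuous_const.mul (Complex.continuous_ofReal.comp (hcont_x 0))).mul φ₂.continuous)
    have h2 : Continuous fun x : E3 => -Complex.I * pd 2 (⇑φ₂) x :=
      continuous_const.mul (hcont_pd 2)
    exact ((h0.norm.pow 2).add (h1.norm.pow 2)).add (h2.norm.pow 2)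
  have hFcont : Continuous (fun x => coul (⇑φ₁) x) :=
    continuous_iff_continuousAt.mpr fun x => (coul_differentiableAt φ₁ x).continuousAt
  have hf₁m : AEStronglyMeasurable f₁ volume :=
    (continuous_const.mul (hFcont.mul hcont_s₂)).aestronglyMeasurable
  have hGmeas : Measurable G := (measurable_fderiv ℝ (fun x' => coul (⇑φ₁) x')).norm
  have hf₂m : AEStronglyMeasurable f₂ volume :=
    (((hGmeas.mul φ₂.continuous.norm.measurable)).const_mul 3).aestronglyMeasurable
  rw [hsqrt]
  have step1 : eLpNorm (fun x =>
      Real.sqrt (magGradNormSq b (fun x' => ((coul (⇑φ₁) x' : ℝ):ℂ) * φ₂ x') x)) 2 volume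
      ≤ eLpNorm (fun x => f₁ x + f₂ x) 2 volume := by
    apply eLpNorm_mono
    intro x
    rw [Real.norm_eq_abs, abs_of_nonneg (Real.sqrt_nonneg _), Real.norm_eq_abs]
    exact le_trans (key_pointwise b φ₁ φ₂ x) (le_abs_self _)
  have step2 : eLpNorm (fun x => f₁ x + f₂ x) 2 volume
      ≤ eLpNorm f₁ 2 volume + eLpNorm f₂ 2 volume := by
    have hsum : (fun x => f₁ x + f₂ x) = f₁ + f₂ := rfl
    rw [hsum]
    exact eLpNorm_add_le hf₁m hf₂m one_le_two
  have hFleq : ∀ x : E3, coul (⇑φ₁) x ≤ C₁ * A^2 := fun x => by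
    have h1 := hL φ₁ x
    rwa [← hN₁def, ← hAdef] at h1
  have hb1 : eLpNorm f₁ 2 volume ≤ ENNReal.ofReal (3*C₁) * N₁^2 * N₂ := by
    have hmono : ∀ x, ‖f₁ x‖ ≤ ‖(3*(C₁*A^2)) * s₂ x‖ := fun x => by
      have h1 : 0 ≤ s₂ x := Real.sqrt_nonneg _
      have h2 : 0 ≤ f₁ x := by
        have := coul_nonneg (⇑φ₁) x
        have : 0 ≤ coul (⇑φ₁) x * s₂ x := mul_nonneg this h1
        simp only [hf₁]
        linarith
      rw [Real.norm_eq_abs, Real.norm_eq_abs, abs_of_nonneg h2, abs_of_nonneg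
        (mul_nonneg (by positivity) h1)]
      calc f₁ x = 3 * (coul (⇑φ₁) x * s₂ x) := rfl
        _ ≤ 3 * ((C₁*A^2) * s₂ x) :=
            mul_le_mul_of_nonneg_left (mul_le_mul_of_nonneg_right (hFleq x) h1) (by norm_num)
        _ = (3*(C₁*A^2)) * s₂ x := by ring
    calc eLpNorm f₁ 2 volume ≤ eLpNorm (fun x => (3*(C₁*A^2)) * s₂ x) 2 volume :=
          eLpNorm_mono hmono
      _ = (‖(3*(C₁*A^2))‖₊ : ℝ≥0∞) * eLpNorm s₂ 2 volume := by
          have hsm : (fun x => (3*(C₁*A^2)) * s₂ x) = (3*(C₁*A^2)) • s₂ := rfl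
          rw [hsm, eLpNorm_const_smul]; rfl
      _ = ENNReal.ofReal (3*(C₁*A^2)) * N₂ := by
          rw [show (‖(3*(C₁*A^2))‖₊ : ℝ≥0∞) = ‖(3*(C₁*A^2))‖ₑ from rfl, Real.enorm_eq_ofReal (by positivity)]
          congr 1
          rw [hs₂, hN₂def]
          exact (hsqrt (⇑φ₂)).symm
      _ = ENNReal.ofReal (3*C₁) * N₁^2 * N₂ := by
          rw [show 3*(C₁*A^2) = (3*C₁)*A^2 by ring,
            ENNReal.ofReal_mul (by positivity), ENNReal.ofReal_pow hAnn, hAdef,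
            ENNReal.ofReal_toReal hN1]
  have hb2 : eLpNorm f₂ 2 volume ≤ ENNReal.ofReal (3*C₃*C₂) * N₁^2 * N₂ := by
    have hsm : f₂ = (3:ℝ) • (fun x => G x * ‖φ₂ x‖) := rfl
    calc eLpNorm f₂ 2 volume
        = (‖(3:ℝ)‖₊ : ℝ≥0∞) * eLpNorm (fun x => G x * ‖φ₂ x‖) 2 volume := by
          rw [hsm, eLpNorm_const_smul]; rfl
      _ ≤ (‖(3:ℝ)‖₊ : ℝ≥0∞) * (eLpNorm G 3 volume * eLpNorm (fun x => ‖φ₂ x‖) 6 volume) := by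
          apply mul_le_mul_right
          have hsm2 : (fun x => G x * ‖φ₂ x‖) = G • (fun x => ‖φ₂ x‖) := rfl
          rw [hsm2]
          exact eLpNorm_smul_le_mul_eLpNorm (φ₂.continuous.norm.aestronglyMeasurable)
            hGmeas.aestronglyMeasurable (hpqr := ⟨by simpa only [one_div] using half_eq.symm⟩)
      _ ≤ (‖(3:ℝ)‖₊ : ℝ≥0∞) * ((ENNReal.ofReal C₃ * N₁^2) * (ENNReal.ofReal C₂ * N₂)) := by
          apply mul_le_mul_right
          apply mul_le_mul'
          · exact hH φ₁
          · rw [eLpNorm_norm]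
            exact hS φ₂
      _ = ENNReal.ofReal (3*C₃*C₂) * N₁^2 * N₂ := by
          rw [show (‖(3:ℝ)‖₊ : ℝ≥0∞) = ‖(3:ℝ)‖ₑ from rfl, Real.enorm_eq_ofReal (by norm_num : (0:ℝ) ≤ 3),
            show 3*C₃*C₂ = 3*(C₃*C₂) by ring,
            ENNReal.ofReal_mul (by norm_num : (0:ℝ) ≤ 3),
            ENNReal.ofReal_mul hC₃.le]
          ring
  calc eLpNorm (fun x =>
      Real.sqrt (magGradNormSq b (fun x' => ((coul (⇑φ₁) x' : ℝ):ℂ) * φ₂ x') x)) 2 volume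
      ≤ eLpNorm f₁ 2 volume + eLpNorm f₂ 2 volume := step1.trans step2
    _ ≤ ENNReal.ofReal (3*C₁) * N₁^2 * N₂ + ENNReal.ofReal (3*C₃*C₂) * N₁^2 * N₂ :=
        add_le_add hb1 hb2
    _ = ENNReal.ofReal (3*C₁ + 3*C₃*C₂) * N₁^2 * N₂ := by
        rw [ENNReal.ofReal_add (by positivity) (by positivity)]
        ring

end
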